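/- Let N ≥ 1 and n ≥ 1. Then every n-outcome POVM M on (ℂ²)^{⊗N} ≅ ℂ^{2^N} satisfies R_{Sep(N)}(M) ≤ 2^{(3N/2) − 1} − 1, where Sep(N) is the set of n-outcome POVMs all of whose effects are N-qubit separable. -/

import Mathlib

open scoped BigOperators ComplexOrder

/-- A POVM with outcome set `κ` on the Hilbert space with orthonormal basis indexed by `ι`:
a tuple of positive semidefinite matrices summing to `1`. -/
def IsPOVM {ι κ : Type*} [Fintype ι] [DecidableEq ι] [Fintype κ]
    (M : κ → Matrix ι ι ℂ) : Prop :=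
  (∀ k, (M k).PosSemidef) ∧ ∑ k, M k = 1

/-- An elementary product operator on `N` qubits: an `N`-fold Kronecker product
`A_1 ⊗ ⋯ ⊗ A_N` of positive semidefinite `2×2` matrices. -/
def IsProdPSD {N : ℕ} (X : Matrix (Fin N → Fin 2) (Fin N → Fin 2) ℂ) : Prop :=
  ∃ A : Fin N → Matrix (Fin 2) (Fin 2) ℂ,
    (∀ t, (A t).PosSemidef) ∧ ∀ x y, X x y = ∏ t, A t (x t) (y t)

/-- An `N`-qubit separable operator: a finite sum of elementary product operators. -/
def IsNSep {N : ℕ} (X : Matrix (Fin N → Fin 2) (Fin N → Fin 2) ℂ) : Prop :=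
  ∃ (k : ℕ) (Y : Fin k → Matrix (Fin N → Fin 2) (Fin N → Fin 2) ℂ),
    (∀ i, IsProdPSD (Y i)) ∧ X = ∑ i, Y i

/-- The set of `n`-outcome separable POVMs on `N` qubits. -/
def SepPOVM (N n : ℕ) : Set (Fin n → Matrix (Fin N → Fin 2) (Fin N → Fin 2) ℂ) :=
  {M | IsPOVM M ∧ ∀ i, IsNSep (M i)}

/-- The set of admissible noise parameters `s ≥ 0` for which some POVM `N` makes
`(M + s N)/(1+s)` a member of `F`. -/
def robustnessSet {ι κ : Type*} [Fintype ι] [DecidableEq ι] [Fintype κ]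
    (F : Set (κ → Matrix ι ι ℂ)) (M : κ → Matrix ι ι ℂ) : Set ℝ :=
  {s : ℝ | 0 ≤ s ∧ ∃ N, IsPOVM N ∧
    (fun k => (1 + s)⁻¹ • (M k + s • N k)) ∈ F}

/-- The robustness of `M` with respect to `F`. -/
noncomputable def robustness {ι κ : Type*} [Fintype ι] [DecidableEq ι] [Fintype κ]
    (F : Set (κ → Matrix ι ι ℂ)) (M : κ → Matrix ι ι ℂ) : ℝ :=
  sInf (robustnessSet F M)

/-! Dephasing in the computational basis maps every POVM to a diagonal one, and diagonal positive
semidefinite operators are sums of product projectors, hence separable. The pinching inequality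
`B ≤ d • diagonal B.diag` in dimension `d = 2^N` makes the effects
`(2^N • diagonal (M k).diag - M k) / (2^N - 1)` a noise POVM, so
`R ≤ 2^N - 1 ≤ 2^{3N/2 - 1} - 1` once `N ≥ 2`. For one qubit every positive semidefinite
operator is already a product, so the robustness is `0`. -/

open Matrix

namespace Matrix

section Pinching

variable {ι 𝕜 : Type*} [Fintype ι] [DecidableEq ι] [RCLike 𝕜]

lemma sum_single_one_mul_mul_single_one (B : Matrix ι ι 𝕜) :
    ∑ x, single x x (1 : 𝕜) * B * single x x 1 = diagonal B.diag := by
  simp only [single_mul_mul_single, one_mul, mul_one]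
  exact sum_single_eq_diagonal B.diag

lemma sum_sum_sub_single_mul_mul_sub_single (B : Matrix ι ι 𝕜) :
    ∑ x, ∑ y, (single x x (1 : 𝕜) - single y y 1) * B * (single x x 1 - single y y 1) =
      (2 : 𝕜) • (Fintype.card ι • diagonal B.diag - B) := by
  set E : ι → Matrix ι ι 𝕜 := fun x => single x x 1
  have hE : ∑ x, E x = 1 := by
    simp only [E, sum_single_eq_diagonal (fun _ => (1 : 𝕜))]
    exact diagonal_one
  have hexp : ∀ x y, (E x - E y) * B * (E x - E y) =
      (E x * B * E x + E y * B * E y) - (E x * B * E y + E y * B * E x) := by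
    intro x y; noncomm_ring
  have hcross : ∑ x, ∑ y, E x * B * E y = B := by
    simp only [← Finset.mul_sum, ← Finset.sum_mul, hE, one_mul, mul_one]
  simp only [E] at hexp hcross
  simp only [hexp, Finset.sum_sub_distrib, Finset.sum_add_distrib, Finset.sum_const,
    Finset.card_univ, hcross]
  rw [Finset.sum_comm (f := fun x y => single y y (1 : 𝕜) * B * single x x 1), hcross,
    ← Finset.smul_sum, sum_single_one_mul_mul_single_one, two_smul]
  abel

theorem PosSemidef.card_nsmul_diagonal_diag_sub {B : Matrix ι ι 𝕜} (hB : B.PosSemidef) :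
    (Fintype.card ι • diagonal B.diag - B).PosSemidef := by
  have hterm : ∀ x y : ι,
      ((single x x (1 : 𝕜) - single y y 1) * B * (single x x 1 - single y y 1)).PosSemidef := by
    intro x y
    have hD : (single x x (1 : 𝕜) - single y y 1)ᴴ = single x x 1 - single y y 1 := by
      simp only [conjTranspose_sub, conjTranspose_single, star_one]
    have h := hB.conjTranspose_mul_mul_same (single x x (1 : 𝕜) - single y y 1)
    rwa [hD] at h
  have hsum : ((2 : 𝕜) • (Fintype.card ι • diagonal B.diag - B)).PosSemidef := by
    rw [← sum_sum_sub_single_mul_mul_sub_single]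
    exact posSemidef_sum _ fun x _ => posSemidef_sum _ fun y _ => hterm x y
  have h := hsum.smul (a := (2⁻¹ : 𝕜)) (by simp)
  rwa [smul_smul, inv_mul_cancel₀ two_ne_zero, one_smul] at h

end Pinching

lemma PosSemidef.single_self {ι R : Type*} [DecidableEq ι] [Ring R] [PartialOrder R]
    [StarRing R] [StarOrderedRing R] (i : ι) {c : R} (hc : 0 ≤ c) :
    (single i i c).PosSemidef := by
  rw [← diagonal_single]
  exact .diagonal (Pi.single_nonneg.2 hc)

end Matrix

lemma isProdPSD_single {N : ℕ} (t₀ : Fin N) (x₀ : Fin N → Fin 2) {c : ℂ} (hc : 0 ≤ c) :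
    IsProdPSD (single x₀ x₀ c) := by
  refine ⟨fun t => single (x₀ t) (x₀ t) (if t = t₀ then c else 1),
    fun t => .single_self _ ?_, fun x y => ?_⟩
  · split_ifs <;> simp [hc]
  · simp only [single_apply, Finset.prod_ite_zero, Finset.prod_ite_eq', Finset.mem_univ,
      if_true, funext_iff, forall_const, forall_and]

lemma isNSep_sum {N : ℕ} {ι : Type*} [Fintype ι]
    {Y : ι → Matrix (Fin N → Fin 2) (Fin N → Fin 2) ℂ} (hY : ∀ i, IsProdPSD (Y i)) :
    IsNSep (∑ i, Y i) :=
  ⟨Fintype.card ι, Y ∘ (Fintype.equivFin ι).symm, fun _ => hY _,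
    (Equiv.sum_comp (Fintype.equivFin ι).symm Y).symm⟩

lemma isNSep_diagonal {N : ℕ} (t₀ : Fin N) {f : (Fin N → Fin 2) → ℂ} (hf : 0 ≤ f) :
    IsNSep (diagonal f) := by
  rw [← sum_single_eq_diagonal]
  exact isNSep_sum fun x => isProdPSD_single t₀ x (hf x)

lemma isNSep_of_posSemidef_fin_one {X : Matrix (Fin 1 → Fin 2) (Fin 1 → Fin 2) ℂ}
    (hX : X.PosSemidef) : IsNSep X := by
  refine ⟨1, fun _ => X, fun _ => ⟨fun _ => X.submatrix (fun a _ => a) (fun a _ => a),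
    fun _ => hX.submatrix _, fun x y => ?_⟩, by simp⟩
  simp only [Fin.prod_univ_one, submatrix_apply]
  congr <;> funext t <;> rw [Subsingleton.elim t 0]

lemma IsPOVM.diagonal_diag {ι κ : Type*} [Fintype ι] [DecidableEq ι] [Fintype κ]
    {M : κ → Matrix ι ι ℂ} (hM : IsPOVM M) : IsPOVM fun k => diagonal (M k).diag := by
  refine ⟨fun k => .diagonal fun x => (hM.1 k).diag_nonneg, ?_⟩
  have h := map_sum (diagonalAddMonoidHom ι ℂ) (fun k => (M k).diag) Finset.univ
  simp only [diagonalAddMonoidHom_apply] at h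
  rw [← h, ← diag_sum, hM.2, diag_one, diagonal_one']

section Robustness

variable {ι κ : Type*} [Fintype ι] [DecidableEq ι] [Fintype κ]
  {F : Set (κ → Matrix ι ι ℂ)} {M : κ → Matrix ι ι ℂ}

lemma robustness_le {s : ℝ} (hs : s ∈ robustnessSet F M) : robustness F M ≤ s :=
  csInf_le ⟨0, fun _ ht => ht.1⟩ hs

lemma robustness_nonpos_of_mem (hM : IsPOVM M) (hMF : M ∈ F) : robustness F M ≤ 0 :=
  robustness_le ⟨le_rfl, M, hM, by simpa using hMF⟩

lemma robustness_le_sub_one_of_posSemidef_smul_sub (hM : ∑ k, M k = 1)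
    {D : κ → Matrix ι ι ℂ} (hD : ∑ k, D k = 1) (hDF : D ∈ F) {c : ℝ} (hc : 1 < c)
    (hDM : ∀ k, (c • D k - M k).PosSemidef) : robustness F M ≤ c - 1 := by
  have hc₀ : c ≠ 0 := by positivity
  have hc₁ : c - 1 ≠ 0 := sub_ne_zero.2 hc.ne'
  refine robustness_le ⟨by linarith, fun k => (c - 1)⁻¹ • (c • D k - M k),
    ⟨fun k => (hDM k).smul (inv_nonneg.2 (by linarith)), ?_⟩, ?_⟩
  · rw [← Finset.smul_sum, Finset.sum_sub_distrib, ← Finset.smul_sum, hD, hM,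
      show c • (1 : Matrix ι ι ℂ) - 1 = (c - 1) • 1 by rw [sub_smul, one_smul], smul_smul,
      inv_mul_cancel₀ hc₁, one_smul]
  · convert hDF using 2 with k
    rw [smul_smul, mul_inv_cancel₀ hc₁, one_smul, add_sub_cancel, add_sub_cancel, smul_smul,
      inv_mul_cancel₀ hc₀, one_smul]

end Robustness

theorem robustness_sep_qubits_le_general (N n : ℕ) (hN : 1 ≤ N)
    (M : Fin n → Matrix (Fin N → Fin 2) (Fin N → Fin 2) ℂ) (hM : IsPOVM M) :
    robustness (SepPOVM N n) M ≤ (2 : ℝ) ^ ((3 * (N : ℝ)) / 2 - 1) - 1 := by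
  obtain rfl | hN₂ : N = 1 ∨ 2 ≤ N := by omega
  · calc robustness (SepPOVM 1 n) M ≤ 0 :=
          robustness_nonpos_of_mem hM ⟨hM, fun k => isNSep_of_posSemidef_fin_one (hM.1 k)⟩
      _ ≤ _ := by
          rw [sub_nonneg]
          exact Real.one_le_rpow one_le_two (by norm_num)
  · have hD := hM.diagonal_diag
    have hsep : (fun k => diagonal (M k).diag) ∈ SepPOVM N n :=
      ⟨hD, fun k => isNSep_diagonal ⟨0, hN⟩ fun _ => (hM.1 k).diag_nonneg⟩
    have hpinch : ∀ k, (((2 : ℝ) ^ N) • diagonal (M k).diag - M k).PosSemidef := by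
      intro k
      have h := (hM.1 k).card_nsmul_diagonal_diag_sub
      rwa [Fintype.card_fun, Fintype.card_fin, Fintype.card_fin, ← Nat.cast_smul_eq_nsmul ℝ,
        Nat.cast_pow, Nat.cast_ofNat] at h
    calc robustness (SepPOVM N n) M ≤ (2 : ℝ) ^ N - 1 :=
          robustness_le_sub_one_of_posSemidef_smul_sub hM.2 hD.2 hsep
            (one_lt_pow₀ one_lt_two (by omega)) hpinch
      _ ≤ _ := by
          gcongr
          rw [← Real.rpow_natCast]
          exact Real.rpow_le_rpow_of_exponent_le one_le_two (by
            have : (2 : ℝ) ≤ N := by exact_mod_cast hN₂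
            linarith)

/-- Every `n`-outcome POVM on `N` qubits has robustness at most `2^{3N/2 − 1} − 1` with
respect to separable POVMs. -/
theorem robustness_sep_qubits_le (N n : ℕ) (hN : 1 ≤ N) (hn : 1 ≤ n)
    (M : Fin n → Matrix (Fin N → Fin 2) (Fin N → Fin 2) ℂ) (hM : IsPOVM M) :
    robustness (SepPOVM N n) M ≤ (2 : ℝ) ^ ((3 * (N : ℝ)) / 2 - 1) - 1 :=
  robustness_sep_qubits_le_general N n hN M hM
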